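/- Let K solve the unperturbed invariance equation (ω₀ ∂_θ + λ₀ s ∂_s) K = X₀∘K with DK invertible, and let x(t) = K∘W(θ + ωt, s e^{λt}) for a C¹ map W. Then x solves ẋ(t) = X₀(x(t)) + εP(x(t), x̃(t), ε) for all (θ,s) and t if and only if W satisfies (ω ∂_θ + λ s ∂_s) W(θ,s) = (ω₀, λ₀ W₂(θ,s)) + ε (DK∘W)^{-1} P(K∘W, K∘W̃, ε), where x̃(t) = x(t − r(x(t))) and W̃(θ,s) = W(θ − ω r(K∘W(θ,s)), s e^{−λ r(K∘W(θ,s))}). -/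

import Mathlib

/-- Reduction of the SDDE to the invariance equation: with `K` solving the
unperturbed invariance equation and `DK` invertible, `x(t) = K∘W(θ+ωt, s e^{λt})`
solves `ẋ = X₀(x) + εP(x, x̃, ε)` (where `x̃(t) = x(t − r(x(t)))`) for all
`(θ,s)` and `t` iff `W` satisfies
`(ω ∂_θ + λ s ∂_s) W = (ω₀, λ₀ W₂) + ε (DK∘W)⁻¹ P(K∘W, K∘W̃, ε)`. -/
theorem sdde_iff_invariance_equation
    (X₀ : ℝ × ℝ → ℝ × ℝ) (P : ℝ × ℝ → ℝ × ℝ → ℝ → ℝ × ℝ) (r : ℝ × ℝ → ℝ)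
    (ε ω₀ lam₀ ω lam : ℝ)
    (K : ℝ × ℝ → ℝ × ℝ) (hKdiff : Differentiable ℝ K)
    (hKinvariance : ∀ p : ℝ × ℝ, fderiv ℝ K p (ω₀, lam₀ * p.2) = X₀ (K p))
    (DKinv : ℝ × ℝ → (ℝ × ℝ →L[ℝ] ℝ × ℝ))
    (hDKinv : ∀ p : ℝ × ℝ,
      (DKinv p).comp (fderiv ℝ K p) = ContinuousLinearMap.id ℝ (ℝ × ℝ) ∧
      (fderiv ℝ K p).comp (DKinv p) = ContinuousLinearMap.id ℝ (ℝ × ℝ))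
    (W : ℝ × ℝ → ℝ × ℝ) (hWdiff : Differentiable ℝ W) :
    (∀ θ s t : ℝ,
      HasDerivAt (fun τ : ℝ => K (W (θ + ω * τ, s * Real.exp (lam * τ))))
        (X₀ (K (W (θ + ω * t, s * Real.exp (lam * t))))
          + ε • P (K (W (θ + ω * t, s * Real.exp (lam * t))))
              (K (W (θ + ω * (t - r (K (W (θ + ω * t, s * Real.exp (lam * t))))),
                     s * Real.exp (lam * (t - r (K (W (θ + ω * t, s * Real.exp (lam * t)))))))))
              ε) t)
    ↔
    (∀ θ s : ℝ,
      fderiv ℝ W (θ, s) (ω, lam * s)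
        = (ω₀, lam₀ * (W (θ, s)).2)
          + ε • DKinv (W (θ, s))
              (P (K (W (θ, s)))
                 (K (W (θ - ω * r (K (W (θ, s))),
                        s * Real.exp (-lam * r (K (W (θ, s)))))))
                 ε)) := by
  have key : ∀ θ s t : ℝ,
      HasDerivAt (fun τ : ℝ => K (W (θ + ω * τ, s * Real.exp (lam * τ))))
        (fderiv ℝ K (W (θ + ω * t, s * Real.exp (lam * t)))
          (fderiv ℝ W (θ + ω * t, s * Real.exp (lam * t))
            (ω, lam * (s * Real.exp (lam * t))))) t := by
    intro θ s t
    have h1 : HasDerivAt (fun τ : ℝ => θ + ω * τ) ω t := by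
      simpa using ((hasDerivAt_id t).const_mul ω).const_add θ
    have h2 : HasDerivAt (fun τ : ℝ => s * Real.exp (lam * τ))
        (lam * (s * Real.exp (lam * t))) t := by
      have he : HasDerivAt (fun τ : ℝ => Real.exp (lam * τ))
          (Real.exp (lam * t) * lam) t := by
        simpa using ((hasDerivAt_id t).const_mul lam).exp
      simpa [mul_comm, mul_left_comm, mul_assoc] using he.const_mul s
    have hg : HasDerivAt (fun τ : ℝ => ((θ + ω * τ, s * Real.exp (lam * τ)) : ℝ × ℝ))
        (ω, lam * (s * Real.exp (lam * t))) t := h1.prodMk h2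
    have hW := (hWdiff _).hasFDerivAt.comp_hasDerivAt t hg
    exact (hKdiff _).hasFDerivAt.comp_hasDerivAt t hW
  constructor
  · intro h θ s
    have h0 := h θ s 0
    have hk := key θ s 0
    simp only [mul_zero, Real.exp_zero, mul_one, add_zero, zero_sub, mul_neg,
      ← sub_eq_add_neg] at h0 hk
    have heq := hk.unique h0
    have hL := (hDKinv (W (θ, s))).1
    have hL' : ∀ v : ℝ × ℝ, DKinv (W (θ, s)) (fderiv ℝ K (W (θ, s)) v) = v := by
      intro v
      have := congrArg (fun L : ℝ × ℝ →L[ℝ] ℝ × ℝ => L v) hL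
      simpa using this
    calc fderiv ℝ W (θ, s) (ω, lam * s)
        = DKinv (W (θ, s)) (fderiv ℝ K (W (θ, s))
            (fderiv ℝ W (θ, s) (ω, lam * s))) := (hL' _).symm
      _ = DKinv (W (θ, s))
            (X₀ (K (W (θ, s)))
              + ε • P (K (W (θ, s)))
                  (K (W (θ - ω * r (K (W (θ, s))),
                         s * Real.exp (-(lam * r (K (W (θ, s))))))))
                  ε) := by rw [heq]
      _ = (ω₀, lam₀ * (W (θ, s)).2)
          + ε • DKinv (W (θ, s))
              (P (K (W (θ, s)))
                 (K (W (θ - ω * r (K (W (θ, s))),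
                        s * Real.exp (-lam * r (K (W (θ, s)))))))
                 ε) := by
          rw [← hKinvariance (W (θ, s))]
          simp [map_add, map_smul, hL', neg_mul]
  · intro h θ s t
    have hk := key θ s t
    have hv := h (θ + ω * t) (s * Real.exp (lam * t))
    rw [hv] at hk
    have hR := (hDKinv (W (θ + ω * t, s * Real.exp (lam * t)))).2
    have hR' : ∀ v : ℝ × ℝ,
        fderiv ℝ K (W (θ + ω * t, s * Real.exp (lam * t)))
          (DKinv (W (θ + ω * t, s * Real.exp (lam * t))) v) = v := by
      intro v
      have := congrArg (fun L : ℝ × ℝ →L[ℝ] ℝ × ℝ => L v) hR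
      simpa using this
    have harg1 : θ + ω * t - ω * r (K (W (θ + ω * t, s * Real.exp (lam * t))))
        = θ + ω * (t - r (K (W (θ + ω * t, s * Real.exp (lam * t))))) := by ring
    have harg2 : s * Real.exp (lam * t) *
          Real.exp (-lam * r (K (W (θ + ω * t, s * Real.exp (lam * t)))))
        = s * Real.exp (lam * (t - r (K (W (θ + ω * t, s * Real.exp (lam * t)))))) := by
      rw [mul_assoc, ← Real.exp_add]
      ring_nf
    rw [map_add, map_smul, hKinvariance, hR', harg1, harg2] at hk
    exact hk
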